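/- Fix a real constant c > 1. Then the equation (1/√π)·e^{-q²}/q − c·erfc(q) = 0 has a unique solution q₀ in (0, ∞), and this solution satisfies q₀ < 1/√(2c(c−1)). -/

import Mathlib

/-!
On `(0, ∞)` one has `F'(q) = e^{-q²} (2(c-1)q² - 1) / (√π q²)`, which is negative for
`q ≤ b := 1/√(2c(c-1))` (as `2(c-1)b² = 1/c < 1`), so `F` is strictly decreasing on `(0, b]`;
it tends to `+∞` at `0⁺`. For `q ≥ b` Komatsu's lower bound
`∫_q^∞ e^{-t²} dt > e^{-q²} / (q + √(q² + 2))` gives `c·erfc q > e^{-q²} / (√π q)`, because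
`q + √(q² + 2) ≤ 2cq` is equivalent to `2c(c-1)q² ≥ 1`. Hence `F < 0` on `[b, ∞)`, and the
intermediate value theorem produces the unique root, which lies in `(0, b)`.
-/

open Real MeasureTheory Filter Set

noncomputable def erf (y : ℝ) : ℝ := (2 / Real.sqrt π) * ∫ t in (0:ℝ)..y, Real.exp (-t ^ 2)

noncomputable def erfc (y : ℝ) : ℝ := (2 / Real.sqrt π) * ∫ t in Set.Ioi y, Real.exp (-t ^ 2)

noncomputable def erfinv : ℝ → ℝ := Function.invFun erf

open Topology

theorem hasDerivAt_integral_Ioi {E : Type*} [NormedAddCommGroup E] [NormedSpace ℝ E]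
    [CompleteSpace E] {f : ℝ → E} (hf : Integrable f) {x : ℝ} (hx : ContinuousAt f x) :
    HasDerivAt (fun y => ∫ t in Ioi y, f t) (-f x) x := by
  have hsplit : (fun y => ∫ t in Ioi y, f t) =
      fun y => (∫ t in Ioi 0, f t) - ∫ t in (0 : ℝ)..y, f t := by
    funext y
    rw [← intervalIntegral.integral_Ioi_sub_Ioi' hf.integrableOn hf.integrableOn, sub_sub_cancel]
  rw [hsplit, ← zero_sub]
  exact (hasDerivAt_const x _).sub <| intervalIntegral.integral_hasDerivAt_right
    hf.intervalIntegrable (hf.aestronglyMeasurable.stronglyMeasurableAtFilter) hx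

theorem integrable_exp_neg_sq : Integrable fun t : ℝ => exp (-t ^ 2) := by
  simpa using integrable_exp_neg_mul_sq one_pos

theorem hasDerivAt_exp_neg_sq (x : ℝ) :
    HasDerivAt (fun y => exp (-y ^ 2)) (-(2 * x * exp (-x ^ 2))) x :=
  ((hasDerivAt_pow 2 x).neg.exp).congr_deriv (by simp; ring)

theorem hasDerivAt_integral_Ioi_exp_neg_sq (x : ℝ) :
    HasDerivAt (fun y => ∫ t in Ioi y, exp (-t ^ 2)) (-exp (-x ^ 2)) x :=
  hasDerivAt_integral_Ioi integrable_exp_neg_sq (by fun_prop)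

theorem abs_lt_sqrt_sq_add_two (x : ℝ) : |x| < √(x ^ 2 + 2) :=
  (lt_sqrt (abs_nonneg x)).2 (by rw [sq_abs]; linarith)

theorem hasDerivAt_integral_Ioi_exp_neg_sq_sub_div (x : ℝ) :
    HasDerivAt (fun y => (∫ t in Ioi y, exp (-t ^ 2)) - exp (-y ^ 2) / (y + √(y ^ 2 + 2)))
      (-(exp (-x ^ 2) * (√(x ^ 2 + 2) - x) / ((x + √(x ^ 2 + 2)) ^ 2 * √(x ^ 2 + 2)))) x := by
  obtain ⟨hxs, hsx⟩ := abs_lt.1 (abs_lt_sqrt_sq_add_two x)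
  have hxs0 : x + √(x ^ 2 + 2) ≠ 0 := by linarith
  have hs2 : √(x ^ 2 + 2) ^ 2 = x ^ 2 + 2 := sq_sqrt (by positivity)
  have hu : HasDerivAt (fun y => y + √(y ^ 2 + 2)) (1 + 2 * x / (2 * √(x ^ 2 + 2))) x :=
    (hasDerivAt_id x).add (((hasDerivAt_pow 2 x).add_const 2).sqrt (by positivity) |>.congr_deriv
      (by simp))
  refine ((hasDerivAt_integral_Ioi_exp_neg_sq x).sub
    ((hasDerivAt_exp_neg_sq x).div hu (by linarith))).congr_deriv ?_
  field_simp
  linear_combination -√(x ^ 2 + 2) * hs2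

/-- Komatsu's lower bound for the Gaussian tail. -/
theorem exp_neg_sq_div_lt_integral_Ioi (x : ℝ) :
    exp (-x ^ 2) / (x + √(x ^ 2 + 2)) < ∫ t in Ioi x, exp (-t ^ 2) := by
  set H := fun y => (∫ t in Ioi y, exp (-t ^ 2)) - exp (-y ^ 2) / (y + √(y ^ 2 + 2))
  have hanti : StrictAnti H := by
    refine strictAnti_of_deriv_neg fun y => ?_
    obtain ⟨hys, hsy⟩ := abs_lt.1 (abs_lt_sqrt_sq_add_two y)
    rw [(hasDerivAt_integral_Ioi_exp_neg_sq_sub_div y).deriv, neg_lt_zero]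
    have hu : 0 < y + √(y ^ 2 + 2) := by linarith
    exact div_pos (mul_pos (exp_pos _) (by linarith)) (by positivity)
  have hlim : Tendsto H atTop (𝓝 0) := by
    have hexp : Tendsto (fun y : ℝ => exp (-y ^ 2)) atTop (𝓝 0) :=
      tendsto_exp_atBot.comp (tendsto_neg_atTop_atBot.comp (tendsto_pow_atTop two_ne_zero))
    have hden : Tendsto (fun y : ℝ => y + √(y ^ 2 + 2)) atTop atTop :=
      tendsto_id.atTop_add_nonneg fun y => sqrt_nonneg _
    simpa using (tendsto_integral_Ioi_zero tendsto_id).sub (hexp.div_atTop hden)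
  have := (hanti (lt_add_one x)).trans_le' (hanti.antitone.le_of_tendsto hlim (x + 1))
  simpa [H, sub_pos] using this

theorem hasDerivAt_erfc (x : ℝ) : HasDerivAt erfc (-(2 / √π * exp (-x ^ 2))) x :=
  ((hasDerivAt_integral_Ioi_exp_neg_sq x).const_mul (2 / √π)).congr_deriv (mul_neg _ _)

theorem continuous_erfc : Continuous erfc :=
  continuous_iff_continuousAt.2 fun x => (hasDerivAt_erfc x).continuousAt

/-- The function `F` whose unique positive root is `q₀`. -/
noncomputable def erfcGap (c q : ℝ) : ℝ := (1 / √π) * exp (-q ^ 2) / q - c * erfc q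

theorem hasDerivAt_erfcGap (c : ℝ) {q : ℝ} (hq : q ≠ 0) :
    HasDerivAt (erfcGap c) (exp (-q ^ 2) * (2 * (c - 1) * q ^ 2 - 1) / (√π * q ^ 2)) q := by
  have hπ : √π ≠ 0 := (sqrt_pos.2 pi_pos).ne'
  refine ((((hasDerivAt_exp_neg_sq q).const_mul (1 / √π)).div (hasDerivAt_id q) hq).sub
    ((hasDerivAt_erfc q).const_mul c)).congr_deriv ?_
  simp only [id]
  field_simp
  ring

theorem continuousOn_erfcGap (c : ℝ) : ContinuousOn (erfcGap c) (Ioi 0) :=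
  fun _ hq => (hasDerivAt_erfcGap c (ne_of_gt hq)).continuousAt.continuousWithinAt

theorem strictAntiOn_erfcGap {c b : ℝ} (hb : 2 * (c - 1) * b ^ 2 < 1) :
    StrictAntiOn (erfcGap c) (Ioc 0 b) := by
  refine strictAntiOn_of_deriv_neg (convex_Ioc 0 b)
    ((continuousOn_erfcGap c).mono Ioc_subset_Ioi_self) fun q hq => ?_
  rw [interior_Ioc] at hq
  obtain ⟨hq0, hqb⟩ := hq
  rw [(hasDerivAt_erfcGap c hq0.ne').deriv]
  have hsq : q ^ 2 < b ^ 2 := by nlinarith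
  have : 2 * (c - 1) * q ^ 2 < 1 := by
    rcases le_or_gt c 1 with hc | hc <;> nlinarith
  exact div_neg_of_neg_of_pos (mul_neg_of_pos_of_neg (exp_pos _) (by linarith))
    (by positivity)

theorem erfcGap_neg {c q : ℝ} (hc : 1 < c) (hq : 0 < q) (hcq : 1 ≤ 2 * c * (c - 1) * q ^ 2) :
    erfcGap c q < 0 := by
  have hπ : 0 < √π := sqrt_pos.2 pi_pos
  have hs : √(q ^ 2 + 2) ≤ (2 * c - 1) * q :=
    (sqrt_le_left (by nlinarith)).2 (by nlinarith)
  -- `q + √(q² + 2) ≤ 2cq` and Komatsu's bound.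
  have hbound : exp (-q ^ 2) / (2 * c * q) < ∫ t in Ioi q, exp (-t ^ 2) :=
    (div_le_div_of_nonneg_left (exp_pos _).le (by positivity) (by linarith)).trans_lt
      (exp_neg_sq_div_lt_integral_Ioi q)
  refine sub_neg.2 ?_
  calc 1 / √π * exp (-q ^ 2) / q = 2 * c / √π * (exp (-q ^ 2) / (2 * c * q)) := by
        field_simp
    _ < 2 * c / √π * ∫ t in Ioi q, exp (-t ^ 2) := by gcongr
    _ = c * erfc q := by rw [erfc]; ring

theorem tendsto_erfcGap_nhdsGT_zero (c : ℝ) : Tendsto (erfcGap c) (𝓝[>] 0) atTop := by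
  have hexp : Tendsto (fun q : ℝ => 1 / √π * exp (-q ^ 2)) (𝓝[>] 0)
      (𝓝 (1 / √π)) := by
    have : Continuous fun q : ℝ => 1 / √π * exp (-q ^ 2) := by fun_prop
    simpa using (this.tendsto 0).mono_left nhdsWithin_le_nhds
  have herfc : Tendsto (fun q => -(c * erfc q)) (𝓝[>] 0) (𝓝 (-(c * erfc 0))) :=
    ((continuous_erfc.tendsto 0).const_mul c).neg.mono_left nhdsWithin_le_nhds
  exact ((hexp.pos_mul_atTop (by positivity) tendsto_inv_nhdsGT_zero).atTop_add herfc).congr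
    fun q => by rw [erfcGap]; ring

theorem unique_root_q0 (c : ℝ) (hc : 1 < c) :
    (∃! q₀ : ℝ, 0 < q₀ ∧ (1 / Real.sqrt π) * Real.exp (-q₀ ^ 2) / q₀ - c * erfc q₀ = 0) ∧
    ∀ q₀ : ℝ, 0 < q₀ → (1 / Real.sqrt π) * Real.exp (-q₀ ^ 2) / q₀ - c * erfc q₀ = 0 →
      q₀ < 1 / Real.sqrt (2 * c * (c - 1)) := by
  set b := 1 / √(2 * c * (c - 1))
  have hA : 0 < 2 * c * (c - 1) := by nlinarith
  have hb : 0 < b := by positivity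
  have hb2 : 2 * c * (c - 1) * b ^ 2 = 1 := by
    rw [div_pow, one_pow, sq_sqrt hA.le, mul_one_div_cancel hA.ne']
  have hneg : ∀ q, b ≤ q → erfcGap c q < 0 := fun q hq =>
    erfcGap_neg hc (hb.trans_le hq)
      (hb2.ge.trans (mul_le_mul_of_nonneg_left (pow_le_pow_left₀ hb.le hq 2) hA.le))
  have hroot_lt : ∀ q, 0 < q → erfcGap c q = 0 → q < b := fun q _ hq =>
    not_le.1 fun hbq => (hneg q hbq).ne hq
  obtain ⟨a, hFa, ha0, hab⟩ :=
    (((tendsto_erfcGap_nhdsGT_zero c).eventually_gt_atTop 0).and (Ioo_mem_nhdsGT hb)).exists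
  obtain ⟨q₀, hq₀, hroot⟩ := intermediate_value_Icc' hab.le
    ((continuousOn_erfcGap c).mono fun q hq => ha0.trans_le hq.1) ⟨(hneg b le_rfl).le, hFa.le⟩
  have hq₀0 : 0 < q₀ := ha0.trans_le hq₀.1
  refine ⟨⟨q₀, ⟨hq₀0, hroot⟩, fun q ⟨hq, hFq⟩ => ?_⟩, hroot_lt⟩
  exact (strictAntiOn_erfcGap (by nlinarith)).injOn ⟨hq, (hroot_lt q hq hFq).le⟩ ⟨hq₀0, hq₀.2⟩
    (hFq.trans hroot.symm)
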